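/- Let ν be a measure on ℝ with density ρ(y) ≤ M/|y|^{1+α} on |y| ≤ 1 with α ∈ [0,2), and ∫_{|y|>1}|y| ν(dy) < ∞. Suppose φ : ℝ → ℝ is Lipschitz with constant L on ℝ, and on an interval D¹ (the 1-neighborhood of a bounded open interval D) the derivative φ' exists and is β−1 Hölder continuous with constant H, for some β ∈ (α, 2) with β > 1. Then there is a constant C depending on M, α, β, L, H, ν such that sup_{x ∈ D} |Iφ(x)| ≤ C, where Iφ(x) = ∫_ℝ [φ(x+y) − φ(x) − y φ'(x) 1_{|y|≤1}] ν(dy). -/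

import Mathlib

open MeasureTheory Set
open scoped ENNReal NNReal

/-!
Split the integral at `|y| = 1`. Near the origin the Hölder continuity of `φ'` and the mean
value theorem give `|φ(x+y) - φ(x) - y φ'(x)| ≤ H |y|^β`, which is integrable against the
density `M |y|^{-1-α}` because `β > α`. Away from the origin the Lipschitz bound `L |y|` is
integrable by the first-moment assumption. Both bounds are uniform in `x ∈ D`, so the integral
of the resulting dominating function is the constant `C`.
-/

noncomputable def levyIntegrand (φ φ' : ℝ → ℝ) (x y : ℝ) : ℝ :=
  φ (x + y) - φ x - (if |y| ≤ 1 then y * φ' x else 0)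

theorem abs_sub_sub_mul_le_of_holder {f f' : ℝ → ℝ} {a b H γ : ℝ} (hγ : 0 ≤ γ)
    (hf : ∀ t ∈ uIcc a b, HasDerivAt f (f' t) t)
    (hf' : ∀ t ∈ uIcc a b, |f' t - f' a| ≤ H * |t - a| ^ γ) :
    |f b - f a - (b - a) * f' a| ≤ H * |b - a| ^ (1 + γ) := by
  rcases eq_or_ne b a with rfl | hba
  · simp [Real.zero_rpow (by linarith : 1 + γ ≠ 0)]
  have hH : 0 ≤ H := nonneg_of_mul_nonneg_left ((abs_nonneg _).trans (hf' b right_mem_uIcc))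
    (Real.rpow_pos_of_pos (abs_pos.2 (sub_ne_zero.2 hba)) γ)
  have hderiv : ∀ t ∈ uIcc a b,
      HasDerivWithinAt (fun u => f u - u * f' a) (f' t - f' a) (uIcc a b) t := fun t ht =>
    ((hf t ht).sub (hasDerivAt_mul_const (f' a))).hasDerivWithinAt
  have hbound : ∀ t ∈ uIcc a b, ‖f' t - f' a‖ ≤ H * |b - a| ^ γ := fun t ht =>
    (hf' t ht).trans <| mul_le_mul_of_nonneg_left
      (Real.rpow_le_rpow (abs_nonneg _) (abs_sub_left_of_mem_uIcc ht) hγ) hH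
  have hmvt := Convex.norm_image_sub_le_of_norm_hasDerivWithin_le hderiv hbound (convex_uIcc a b)
    left_mem_uIcc right_mem_uIcc
  rw [Real.norm_eq_abs, Real.norm_eq_abs] at hmvt
  calc |f b - f a - (b - a) * f' a| = |f b - b * f' a - (f a - a * f' a)| := by ring_nf
    _ ≤ H * |b - a| ^ γ * |b - a| := hmvt
    _ = H * |b - a| ^ (1 + γ) := by
      rw [Real.rpow_add' (abs_nonneg _) (by linarith), Real.rpow_one]
      ring

theorem norm_levyIntegrand_le {φ φ' : ℝ → ℝ} {x L H β : ℝ} (hβ : 1 ≤ β)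
    (hL : ∀ x₁ x₂ : ℝ, |φ x₁ - φ x₂| ≤ L * |x₁ - x₂|)
    (hd : ∀ t ∈ Icc (x - 1) (x + 1), HasDerivAt φ (φ' t) t)
    (hH : ∀ t ∈ Icc (x - 1) (x + 1), |φ' t - φ' x| ≤ H * |t - x| ^ (β - 1)) (y : ℝ) :
    ‖levyIntegrand φ φ' x y‖ ≤ if |y| ≤ 1 then H * |y| ^ β else L * |y| := by
  rw [levyIntegrand, Real.norm_eq_abs]
  split_ifs with hy
  · have hsub : uIcc x (x + y) ⊆ Icc (x - 1) (x + 1) := fun t ht => by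
      have := (abs_sub_left_of_mem_uIcc ht).trans (by simpa using hy)
      constructor <;> linarith [abs_le.1 this]
    have := abs_sub_sub_mul_le_of_holder (by linarith) (fun t ht => hd t (hsub ht))
      (fun t ht => hH t (hsub ht))
    simpa using this
  · simpa using hL (x + y) x

theorem measurable_levyIntegrand {φ : ℝ → ℝ} (hφ : Measurable φ) (φ' : ℝ → ℝ) (x : ℝ) :
    Measurable (levyIntegrand φ φ' x) :=
  ((hφ.comp (measurable_const_add x)).sub measurable_const).sub <|
    Measurable.ite (measurableSet_le measurable_abs measurable_const)
      (measurable_id.mul_const _) measurable_const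

theorem integrableOn_abs_rpow_withDensity {ρ : ℝ → ℝ≥0∞} {M α β : ℝ} (hαβ : α < β)
    (hρ : ∀ y : ℝ, y ≠ 0 → |y| ≤ 1 → ρ y ≤ ENNReal.ofReal (M / |y| ^ (1 + α))) :
    IntegrableOn (fun y => |y| ^ β) {y | |y| ≤ 1} (volume.withDensity ρ) := by
  set A := {y : ℝ | |y| ≤ 1}
  have hA : MeasurableSet A := measurableSet_le measurable_abs measurable_const
  set κ : ℝ → ℝ≥0∞ := fun y => ENNReal.ofReal (|M| / |y| ^ (1 + α))
  have hρκ : ρ ≤ᵐ[volume.restrict A] κ := by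
    filter_upwards [ae_restrict_mem hA, ae_restrict_of_ae (volume.ae_ne 0)] with y hyA hy0
    refine (hρ y hy0 hyA).trans (ENNReal.ofReal_le_ofReal ?_)
    gcongr
    exact le_abs_self M
  have hκ : Integrable (fun y => |y| ^ β * (κ y).toReal) (volume.restrict A) := by
    have hdecay : ∀ᵐ y ∂volume.restrict (Metric.ball 0 2),
        ‖|y| ^ β * (κ y).toReal‖ ≤ |M| * ‖y‖ ^ (-(1 + α - β)) := by
      filter_upwards [ae_restrict_of_ae (volume.ae_ne 0)] with y hy0
      have hy : 0 < |y| := abs_pos.2 hy0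
      rw [ENNReal.toReal_ofReal (by positivity), Real.norm_eq_abs, Real.norm_eq_abs,
        abs_of_nonneg (by positivity), neg_sub, Real.rpow_sub hy, div_eq_mul_inv,
        div_eq_mul_inv]
      apply le_of_eq
      ring
    refine (integrableOn_ball_of_norm_le_rpow (by simp) (by simp; linarith) hdecay
      (by fun_prop)).mono_set fun y hy => ?_
    simpa using (show |y| ≤ 1 from hy).trans_lt one_lt_two
  rw [IntegrableOn, restrict_withDensity hA]
  refine Integrable.mono_measure ?_ (withDensity_mono hρκ)
  rwa [integrable_withDensity_iff (by fun_prop) (ae_of_all _ fun _ => ENNReal.ofReal_lt_top)]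

theorem stmt_1_general
    (ν : Measure ℝ) (ρ : ℝ → ℝ≥0∞) (M α β L H l r : ℝ)
    (hν : ν = MeasureTheory.volume.withDensity ρ)
    (hρ : ∀ y : ℝ, y ≠ 0 → |y| ≤ 1 → ρ y ≤ ENNReal.ofReal (M / |y| ^ (1 + α)))
    (hmom : IntegrableOn (fun y => |y|) {y : ℝ | 1 < |y|} ν)
    (hβα : α < β) (hβ1 : 1 < β)
    (φ φ' : ℝ → ℝ)
    (hL : ∀ x₁ x₂ : ℝ, |φ x₁ - φ x₂| ≤ L * |x₁ - x₂|)
    (hd : ∀ x ∈ Ioo (l - 1) (r + 1), HasDerivAt φ (φ' x) x)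
    (hH : ∀ x₁ ∈ Ioo (l - 1) (r + 1), ∀ x₂ ∈ Ioo (l - 1) (r + 1),
      |φ' x₁ - φ' x₂| ≤ H * |x₁ - x₂| ^ (β - 1)) :
    ∃ C : ℝ, ∀ x ∈ Ioo l r,
      Integrable (fun y => φ (x + y) - φ x - (if |y| ≤ 1 then y * φ' x else 0)) ν ∧
      |∫ y, (φ (x + y) - φ x - (if |y| ≤ 1 then y * φ' x else 0)) ∂ν| ≤ C := by
  set g : ℝ → ℝ := fun y => if |y| ≤ 1 then H * |y| ^ β else L * |y|
  have hg : Integrable g ν := by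
    show Integrable ({y : ℝ | |y| ≤ 1}.piecewise _ _) ν
    refine Integrable.piecewise (measurableSet_le measurable_abs measurable_const) ?_ ?_
    · exact hν ▸ (integrableOn_abs_rpow_withDensity hβα hρ).const_mul H
    · have hcompl : {y : ℝ | |y| ≤ 1}ᶜ = {y | 1 < |y|} := by ext; simp
      rw [hcompl]
      exact hmom.const_mul L
  have hφ : Continuous φ := (LipschitzWith.of_dist_le' hL).continuous
  refine ⟨∫ y, g y ∂ν, fun x hx => ?_⟩
  have hsub : Icc (x - 1) (x + 1) ⊆ Ioo (l - 1) (r + 1) :=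
    Icc_subset_Ioo (by linarith [hx.1]) (by linarith [hx.2])
  have hbound : ∀ y, ‖levyIntegrand φ φ' x y‖ ≤ g y :=
    norm_levyIntegrand_le hβ1.le hL (fun t ht => hd t (hsub ht))
      (fun t ht => hH t (hsub ht) x (hsub ⟨by linarith, by linarith⟩))
  have hmeas := (measurable_levyIntegrand hφ.measurable φ' x).aestronglyMeasurable (μ := ν)
  exact ⟨hg.mono' hmeas (ae_of_all _ hbound),
    norm_integral_le_of_norm_le hg (ae_of_all _ hbound)⟩

theorem stmt_1
    (ν : Measure ℝ) (ρ : ℝ → ℝ≥0∞) (M α β L H l r : ℝ)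
    (hν : ν = MeasureTheory.volume.withDensity ρ)
    (hM : 0 < M) (hα0 : 0 ≤ α) (hα2 : α < 2)
    (hρ : ∀ y : ℝ, y ≠ 0 → |y| ≤ 1 → ρ y ≤ ENNReal.ofReal (M / |y| ^ (1 + α)))
    (hmom : IntegrableOn (fun y => |y|) {y : ℝ | 1 < |y|} ν)
    (hlr : l < r) (hβα : α < β) (hβ2 : β < 2) (hβ1 : 1 < β)
    (φ φ' : ℝ → ℝ)
    (hL : ∀ x₁ x₂ : ℝ, |φ x₁ - φ x₂| ≤ L * |x₁ - x₂|)
    (hd : ∀ x ∈ Ioo (l - 1) (r + 1), HasDerivAt φ (φ' x) x)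
    (hH : ∀ x₁ ∈ Ioo (l - 1) (r + 1), ∀ x₂ ∈ Ioo (l - 1) (r + 1),
      |φ' x₁ - φ' x₂| ≤ H * |x₁ - x₂| ^ (β - 1)) :
    ∃ C : ℝ, ∀ x ∈ Ioo l r,
      Integrable (fun y => φ (x + y) - φ x - (if |y| ≤ 1 then y * φ' x else 0)) ν ∧
      |∫ y, (φ (x + y) - φ x - (if |y| ≤ 1 then y * φ' x else 0)) ∂ν| ≤ C :=
  stmt_1_general ν ρ M α β L H l r hν hρ hmom hβα hβ1 φ φ' hL hd hH
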